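/- Fix t ∈ (0,1), a compact set K₁ ⊂ (t,1) and a compact set K₂ ⊂ ℂ ∖ [0,∞). Then there exists a constant M₀ > 0, depending on K₁, K₂ and t, such that for all z, w ∈ ℂ with |w| = r, |z| = R, R > r > tR > 0 and r/R ∈ K₁, and all u ∈ K₂, one has |S(w, z; u, t)| ≤ M₀. -/

import Mathlib

/-!
Write `s = s_m` for the exponent of the `m`-th term. Then `Re s = log (r/R) / log t` ranges over a
compact subset of `(0, 1)` and `|Im s| ≥ 2π(|m| - 1) / |log t|`. The numerator satisfies
`|(-u)^s| ≤ max 1 |u| · e^{|arg(-u)| |Im s|}`, while `|sin(π s)| ≥ |sin(π Re s)| cosh(π Im s)`.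
By compactness `|sin(π Re s)|` is bounded below and `|arg(-u)| ≤ π - δ` for some `δ > 0`, so the
`m`-th term is `O(e^{-δ |Im s|})`, a geometric majorant in `|m|` that is uniform in all the data.
-/

noncomputable def STerm (t : ℝ) (w z u : ℂ) (m : ℤ) : ℂ :=
  (Real.pi : ℂ) *
      (-u) ^ ((Complex.log w - Complex.log z) / (Real.log t : ℂ) -
        2 * (m : ℂ) * (Real.pi : ℂ) * Complex.I / (Real.log t : ℂ)) /
    Complex.sin (-(Real.pi : ℂ) * ((Complex.log w - Complex.log z) / (Real.log t : ℂ) -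
        2 * (m : ℂ) * (Real.pi : ℂ) * Complex.I / (Real.log t : ℂ)))

noncomputable def SFun (t : ℝ) (w z u : ℂ) : ℂ := ∑' m : ℤ, STerm t w z u m

open Complex Set
open scoped Real ComplexOrder

lemma IsCompact.exists_pos_forall_le {α : Type*} [TopologicalSpace α] {K : Set α}
    (hK : IsCompact K) {f : α → ℝ} (hf : ContinuousOn f K) (hpos : ∀ x ∈ K, 0 < f x) :
    ∃ c > 0, ∀ x ∈ K, c ≤ f x := by
  rcases K.eq_empty_or_nonempty with rfl | hne
  · exact ⟨1, one_pos, by simp⟩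
  obtain ⟨x₀, hx₀, hmin⟩ := hK.exists_isMinOn hne hf
  exact ⟨f x₀, hpos x₀ hx₀, fun x hx => hmin hx⟩

lemma summable_pow_natAbs {ρ : ℝ} (h0 : 0 ≤ ρ) (h1 : ρ < 1) :
    Summable fun m : ℤ => ρ ^ m.natAbs := by
  apply Summable.of_nat_of_neg <;> simpa using summable_geometric_of_lt_one h0 h1

lemma Real.rpow_le_max_one {x p : ℝ} (hx : 0 ≤ x) (hp0 : 0 ≤ p) (hp1 : p ≤ 1) :
    x ^ p ≤ max 1 x := by
  rcases le_total x 1 with h | h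
  · exact (Real.rpow_le_one hx h hp0).trans (le_max_left _ _)
  · exact (Real.rpow_le_self_of_one_le h hp1).trans (le_max_right _ _)

lemma Real.exp_abs_div_two_le_cosh (y : ℝ) : Real.exp |y| / 2 ≤ Real.cosh y := by
  rw [← Real.cosh_abs, Real.cosh_eq]
  linarith [Real.exp_pos (-|y|)]

lemma log_div_log_mem_Ioo {t x : ℝ} (ht : 0 < t) (hx : x ∈ Ioo t 1) :
    Real.log x / Real.log t ∈ Ioo 0 1 :=
  ⟨div_pos_of_neg_of_neg (Real.log_neg (ht.trans hx.1) hx.2) (Real.log_neg ht (hx.1.trans hx.2)),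
    (div_lt_one_of_neg (Real.log_neg ht (hx.1.trans hx.2))).2 (Real.log_lt_log ht hx.1)⟩

namespace Complex

lemma neg_mem_slitPlane_of_notMem_image_Ici {u : ℂ} (hu : u ∉ ofReal '' Ici 0) :
    -u ∈ slitPlane := by
  rw [mem_slitPlane_iff_not_le_zero, neg_nonpos]
  intro h
  exact hu ⟨u.re, (nonneg_iff.1 h).1, (eq_re_of_ofReal_le (r := 0) (by simpa using h)).symm⟩

lemma abs_arg_lt_pi_of_mem_slitPlane {z : ℂ} (hz : z ∈ slitPlane) : |arg z| < π :=
  abs_lt.2 ⟨neg_pi_lt_arg z, (arg_le_pi z).lt_of_ne (slitPlane_arg_ne_pi hz)⟩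

lemma abs_sin_re_mul_cosh_im_le_norm_sin (z : ℂ) :
    |Real.sin z.re| * Real.cosh z.im ≤ ‖sin z‖ := by
  have hre : (sin z).re = Real.sin z.re * Real.cosh z.im := by
    rw [sin_eq]
    simp [sin_ofReal_re, cos_ofReal_re, cosh_ofReal_re, sinh_ofReal_re]
  rw [← abs_of_pos (Real.cosh_pos z.im), ← abs_mul, ← hre]
  exact abs_re_le_norm _

lemma norm_cpow_le_max_one_mul_exp (v : ℂ) {s : ℂ} (h0 : 0 ≤ s.re) (h1 : s.re ≤ 1) :
    ‖v ^ s‖ ≤ max 1 ‖v‖ * Real.exp (|arg v| * |s.im|) := by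
  calc ‖v ^ s‖ ≤ ‖v‖ ^ s.re / Real.exp (arg v * s.im) := norm_cpow_le v s
    _ = ‖v‖ ^ s.re * Real.exp (-(arg v * s.im)) := by rw [Real.exp_neg, div_eq_mul_inv]
    _ ≤ max 1 ‖v‖ * Real.exp (|arg v| * |s.im|) := by
      gcongr
      · exact Real.rpow_le_max_one (norm_nonneg v) h0 h1
      · rw [← abs_mul]
        exact neg_le_abs _

lemma norm_cpow_div_sin_le {v s : ℂ} {c δ : ℝ} (h0 : 0 ≤ s.re) (h1 : s.re ≤ 1) (hc : 0 < c)
    (hsin : c ≤ |Real.sin (π * s.re)|) (harg : |arg v| ≤ π - δ) :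
    ‖v ^ s / sin (-π * s)‖ ≤ 2 * max 1 ‖v‖ / c * Real.exp (-δ * |s.im|) := by
  have hden : c * Real.exp (π * |s.im|) / 2 ≤ ‖sin (-π * s)‖ :=
    calc c * Real.exp (π * |s.im|) / 2 ≤ |Real.sin (π * s.re)| * Real.cosh (π * s.im) := by
          rw [mul_div_assoc]
          gcongr
          simpa [abs_mul, abs_of_pos Real.pi_pos] using Real.exp_abs_div_two_le_cosh (π * s.im)
      _ = |Real.sin (-π * s).re| * Real.cosh (-π * s).im := by
          simp [Real.sin_neg, Real.cosh_neg]
      _ ≤ ‖sin (-π * s)‖ := abs_sin_re_mul_cosh_im_le_norm_sin _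
  rw [norm_div]
  calc ‖v ^ s‖ / ‖sin (-π * s)‖
      ≤ max 1 ‖v‖ * Real.exp ((π - δ) * |s.im|) / (c * Real.exp (π * |s.im|) / 2) := by
        gcongr
        exact (norm_cpow_le_max_one_mul_exp v h0 h1).trans (by gcongr)
    _ = 2 * max 1 ‖v‖ / c * Real.exp (-δ * |s.im|) := by
        rw [show (π - δ) * |s.im| = -δ * |s.im| + π * |s.im| by ring, Real.exp_add]
        field_simp

end Complex

noncomputable def STermExponent (t : ℝ) (w z : ℂ) (m : ℤ) : ℂ :=
  (log w - log z) / (Real.log t : ℂ) - 2 * (m : ℂ) * (π : ℂ) * I / (Real.log t : ℂ)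

lemma STerm_eq (t : ℝ) (w z u : ℂ) (m : ℤ) :
    STerm t w z u m =
      π * ((-u) ^ STermExponent t w z m / sin (-π * STermExponent t w z m)) :=
  mul_div_assoc _ _ _

lemma STermExponent_re (t : ℝ) (w z : ℂ) (m : ℤ) :
    (STermExponent t w z m).re = (Real.log ‖w‖ - Real.log ‖z‖) / Real.log t := by
  simp [STermExponent, div_ofReal_re, log_re]

lemma STermExponent_im (t : ℝ) (w z : ℂ) (m : ℤ) :
    (STermExponent t w z m).im = (arg w - arg z - 2 * m * π) / Real.log t := by
  simp [STermExponent, div_ofReal_im, log_im]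
  ring

lemma le_abs_STermExponent_im {t : ℝ} (ht : Real.log t < 0) (w z : ℂ) (m : ℤ) :
    2 * π * (m.natAbs - 1) / -Real.log t ≤ |(STermExponent t w z m).im| := by
  rw [STermExponent_im, abs_div, abs_of_neg ht]
  refine div_le_div_of_nonneg_right ?_ (neg_nonneg.2 ht.le)
  have harg : |arg w - arg z| ≤ 2 * π := by
    have hw := abs_le.1 (abs_arg_le_pi w)
    have hz := abs_le.1 (abs_arg_le_pi z)
    exact abs_le.2 ⟨by linarith, by linarith⟩
  have hm : |2 * (m : ℝ) * π| = 2 * π * m.natAbs := by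
    rw [abs_mul, abs_mul, abs_of_pos Real.pi_pos, Nat.cast_natAbs, Int.cast_abs]
    norm_num
    ring
  calc 2 * π * (m.natAbs - 1) = |2 * (m : ℝ) * π| - 2 * π := by rw [hm]; ring
    _ ≤ |2 * (m : ℝ) * π| - |arg w - arg z| := by gcongr
    _ ≤ |2 * (m : ℝ) * π - (arg w - arg z)| := abs_sub_abs_le_abs_sub _ _
    _ = |arg w - arg z - 2 * m * π| := abs_sub_comm _ _

lemma norm_STerm_le {t : ℝ} (ht0 : 0 < t) (ht1 : t < 1) {w z u : ℂ} (hwz : ‖w‖ / ‖z‖ ∈ Ioo t 1)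
    {c δ : ℝ} (hc : 0 < c) (hsin : c ≤ |Real.sin (π * (Real.log (‖w‖ / ‖z‖) / Real.log t))|)
    (hδ : 0 ≤ δ) (harg : |arg (-u)| ≤ π - δ) (m : ℤ) :
    ‖STerm t w z u m‖ ≤
      2 * π * max 1 ‖u‖ / c * Real.exp (-δ * (2 * π * (m.natAbs - 1) / -Real.log t)) := by
  obtain ⟨hw, hz⟩ : ‖w‖ ≠ 0 ∧ ‖z‖ ≠ 0 := div_ne_zero_iff.1 (ht0.trans hwz.1).ne'
  have hre : (STermExponent t w z m).re = Real.log (‖w‖ / ‖z‖) / Real.log t := by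
    rw [STermExponent_re, Real.log_div hw hz]
  have hre_mem := log_div_log_mem_Ioo ht0 hwz
  rw [← hre] at hsin hre_mem
  calc ‖STerm t w z u m‖
        = π * ‖(-u) ^ STermExponent t w z m / sin (-π * STermExponent t w z m)‖ := by
        rw [STerm_eq, norm_mul, norm_real, Real.norm_of_nonneg Real.pi_pos.le]
    _ ≤ π * (2 * max 1 ‖-u‖ / c * Real.exp (-δ * |(STermExponent t w z m).im|)) := by
        gcongr
        exact norm_cpow_div_sin_le hre_mem.1.le hre_mem.2.le hc hsin harg
    _ ≤ π * (2 * max 1 ‖-u‖ / c * Real.exp (-δ * (2 * π * (m.natAbs - 1) / -Real.log t))) := by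
        gcongr π * (_ * Real.exp ?_)
        exact mul_le_mul_of_nonpos_left (le_abs_STermExponent_im (Real.log_neg ht0 ht1) w z m)
          (neg_nonpos.2 hδ)
    _ = _ := by
        rw [norm_neg]
        ring

lemma exists_pos_le_abs_sin_mul_log_div_log {t : ℝ} (ht : 0 < t) {K : Set ℝ} (hKc : IsCompact K)
    (hK : K ⊆ Ioo t 1) : ∃ c > 0, ∀ x ∈ K, c ≤ |Real.sin (π * (Real.log x / Real.log t))| := by
  refine hKc.exists_pos_forall_le ?_ fun x hx => ?_
  · refine ContinuousOn.abs (Real.continuous_sin.comp_continuousOn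
      (((Real.continuousOn_log.mono fun x hx => ?_).div_const _).const_smul π))
    exact (ht.trans (hK hx).1).ne'
  · obtain ⟨h0, h1⟩ := log_div_log_mem_Ioo ht (hK hx)
    exact abs_pos.2 (Real.sin_pos_of_pos_of_lt_pi (mul_pos Real.pi_pos h0)
      (mul_lt_of_lt_one_right Real.pi_pos h1)).ne'

lemma exists_pos_abs_arg_neg_le {K : Set ℂ} (hKc : IsCompact K) (hK : K ⊆ (ofReal '' Ici 0)ᶜ) :
    ∃ δ > 0, ∀ u ∈ K, |arg (-u)| ≤ π - δ := by
  have hslit : ∀ u ∈ K, -u ∈ slitPlane := fun u hu =>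
    neg_mem_slitPlane_of_notMem_image_Ici (hK hu)
  obtain ⟨δ, hδ, harg⟩ := hKc.exists_pos_forall_le (f := fun u => π - |arg (-u)|)
    (fun u hu => (continuousAt_const.sub
      ((continuousAt_arg (hslit u hu)).comp continuous_neg.continuousAt).abs).continuousWithinAt)
    (fun u hu => sub_pos.2 (abs_arg_lt_pi_of_mem_slitPlane (hslit u hu)))
  exact ⟨δ, hδ, fun u hu => by linarith [harg u hu]⟩

lemma exists_norm_STerm_le_mul_pow_natAbs {t : ℝ} (ht : t ∈ Ioo (0 : ℝ) 1)
    {K₁ : Set ℝ} (hK₁c : IsCompact K₁) (hK₁ : K₁ ⊆ Ioo t 1)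
    {K₂ : Set ℂ} (hK₂c : IsCompact K₂) (hK₂ : K₂ ⊆ (ofReal '' Ici (0 : ℝ))ᶜ) :
    ∃ C > 0, ∃ ρ ∈ Ico (0 : ℝ) 1, ∀ w z : ℂ, ‖w‖ / ‖z‖ ∈ K₁ → ∀ u ∈ K₂, ∀ m : ℤ,
      ‖STerm t w z u m‖ ≤ C * ρ ^ m.natAbs := by
  have hL : 0 < -Real.log t := neg_pos.2 (Real.log_neg ht.1 ht.2)
  obtain ⟨c, hc, hsin⟩ := exists_pos_le_abs_sin_mul_log_div_log ht.1 hK₁c hK₁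
  obtain ⟨B, hB⟩ := hK₂c.isBounded.exists_norm_le
  obtain ⟨δ, hδ, harg⟩ := exists_pos_abs_arg_neg_le hK₂c hK₂
  refine ⟨2 * π * max 1 B / c * Real.exp (2 * π * δ / -Real.log t), by positivity,
    Real.exp (-(2 * π * δ / -Real.log t)),
    ⟨(Real.exp_pos _).le, Real.exp_lt_one_iff.2 (neg_neg_of_pos (by positivity))⟩,
    fun w z hwz u hu m => ?_⟩
  calc ‖STerm t w z u m‖
      ≤ 2 * π * max 1 ‖u‖ / c * Real.exp (-δ * (2 * π * (m.natAbs - 1) / -Real.log t)) :=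
        norm_STerm_le ht.1 ht.2 (hK₁ hwz) hc (hsin _ hwz) hδ.le (harg u hu) m
    _ ≤ 2 * π * max 1 B / c * Real.exp (-δ * (2 * π * (m.natAbs - 1) / -Real.log t)) := by
        gcongr
        exact hB u hu
    _ = _ := by
        rw [← Real.exp_nat_mul, mul_assoc (2 * π * max 1 B / c), ← Real.exp_add]
        ring_nf

theorem stmt13 (t : ℝ) (ht : t ∈ Set.Ioo (0:ℝ) 1)
    (K₁ : Set ℝ) (hK₁c : IsCompact K₁) (hK₁ : K₁ ⊆ Set.Ioo t 1)
    (K₂ : Set ℂ) (hK₂c : IsCompact K₂) (hK₂ : K₂ ⊆ (Complex.ofReal '' Set.Ici (0:ℝ))ᶜ) :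
    ∃ M₀ > 0, ∀ (z w : ℂ) (r R : ℝ), ‖w‖ = r → ‖z‖ = R →
      R > r → r > t * R → t * R > 0 → r / R ∈ K₁ →
      ∀ u ∈ K₂, ‖SFun t w z u‖ ≤ M₀ := by
  obtain ⟨C, hC, ρ, ⟨hρ0, hρ1⟩, hbound⟩ :=
    exists_norm_STerm_le_mul_pow_natAbs ht hK₁c hK₁ hK₂c hK₂
  have hsum := (summable_pow_natAbs hρ0 hρ1).mul_left C
  refine ⟨∑' m : ℤ, C * ρ ^ m.natAbs,
    hsum.tsum_pos (fun m => mul_nonneg hC.le (pow_nonneg hρ0 _)) 0 (by simpa using hC), ?_⟩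
  rintro z w r R rfl rfl - - - hwz u hu
  exact tsum_of_norm_bounded hsum.hasSum (hbound w z hwz u hu)
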